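/- Let m ≥ 1 and let π be a non-crossing partition of [2m] all of whose blocks have even cardinality. Define Φ(π) to be the partition of [m] obtained by identifying 2k−1 and 2k with k for each k ∈ [m] (i.e. the transitive closure of the relation relating k and l whenever some element of {2k−1,2k} is π-equivalent to some element of {2l−1,2l}). If {k₁ < k₂ < ... < k_p} is a block of Φ(π) (ordered cyclically), then for every i, the elements 2k_i and 2k_{i+1} − 1 lie in the same block of π (with the convention k_{p+1} = k₁). -/

import Mathlib

open Classical

/-- `i` and `j` lie in the same block of the partition `P`. -/
def SameBlock {N : ℕ} (P : Finpartition (Finset.univ : Finset (Fin N))) (i j : Fin N) : Prop :=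
  ∃ b ∈ P.parts, i ∈ b ∧ j ∈ b

/-- A partition of `[N]` is non-crossing if for `i < j < k < l`, `i ∼ k` and `j ∼ l`
imply `i ∼ j` (equivalent for the linear and the cyclic order). -/
def IsNonCrossing {N : ℕ} (P : Finpartition (Finset.univ : Finset (Fin N))) : Prop :=
  ∀ i j k l : Fin N, i < j → j < k → k < l →
    SameBlock P i k → SameBlock P j l → SameBlock P i j

/-- The element of `[2m]` (0-indexed) corresponding to the 1-based element `2k−1`,
where `k ∈ [m]` is represented 0-indexed. -/
def dbl {m : ℕ} (k : Fin m) : Fin (2 * m) := ⟨2 * k.val, by have := k.isLt; omega⟩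

/-- The element of `[2m]` (0-indexed) corresponding to the 1-based element `2k`. -/
def dbl' {m : ℕ} (k : Fin m) : Fin (2 * m) := ⟨2 * k.val + 1, by have := k.isLt; omega⟩

/-- The relation on `[m]` defining `Φ(π)`: the transitive (and reflexive-symmetric)
closure of the relation relating `k` and `l` whenever some element of `{2k−1, 2k}` is
`π`-equivalent to some element of `{2l−1, 2l}`. -/
def PhiRel {m : ℕ} (π : Finpartition (Finset.univ : Finset (Fin (2 * m)))) :
    Fin m → Fin m → Prop :=
  Relation.EqvGen (fun k l =>
    SameBlock π (dbl k) (dbl l) ∨ SameBlock π (dbl k) (dbl' l) ∨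
    SameBlock π (dbl' k) (dbl l) ∨ SameBlock π (dbl' k) (dbl' l))

/-- `l` is the cyclic successor of `k` inside the finite set `B ⊆ ℤ/mℤ`:
either `B = {k}` and `l = k` (convention `k_{p+1} = k₁` for a singleton block), or
`l ∈ B \ {k}` minimizes the cyclic distance `(x − k) mod m` over `x ∈ B \ {k}`. -/
def IsCyclicSuccIn {m : ℕ} (B : Finset (Fin m)) (k l : Fin m) : Prop :=
  k ∈ B ∧ l ∈ B ∧
    ((B = {k} ∧ l = k) ∨
      (l ≠ k ∧ ∀ x ∈ B, x ≠ k → (l - k).val ≤ (x - k).val))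

/-! Let `v` be the element of the `π`-block of `u = 2k` that follows `u` around the circle. By
non-crossingness the elements strictly between `u` and `v` form a union of `π`-blocks, so there is
an even number of them and `v = 2l₀ − 1` is odd. Those elements are exactly the pairs `{2j − 1, 2j}`
with `k < j < l₀` cyclically, so this range of `[m]` is a union of `Φ(π)`-blocks avoiding `k`.
As `l₀` lies in the `Φ(π)`-block of `k`, it is the cyclic successor `l` of `k`. -/

open Finset

namespace Fin

variable {N : ℕ}

lemma val_sub_eq_ite (a b : Fin N) :
    (a - b).val = if b ≤ a then a.val - b.val else N + a.val - b.val := by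
  split_ifs with h
  · exact coe_sub_iff_le.mpr h
  · exact coe_sub_iff_lt.mpr (not_le.mp h)

lemma rotation_lt_of_val_sub_lt {a b c d o : Fin N} (hab : (a - o).val < (b - o).val)
    (hbc : (b - o).val < (c - o).val) (hcd : (c - o).val < (d - o).val) :
    (a < b ∧ b < c ∧ c < d) ∨ (b < c ∧ c < d ∧ d < a) ∨ (c < d ∧ d < a ∧ a < b) ∨
      (d < a ∧ a < b ∧ b < c) := by
  simp only [val_sub_eq_ite, le_def, lt_def] at *
  split_ifs at hab hbc hcd <;> omega

variable [NeZero N]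

lemma val_sub_add_one_self (u : Fin N) : (u - (u + 1)).val = N - 1 := by
  have hN := NeZero.pos N
  have hu := u.isLt
  simp only [val_sub_eq_ite, val_add_eq_ite, val_one', le_def]
  rcases Nat.lt_or_ge 1 N with h | h
  · rw [Nat.mod_eq_of_lt h]
    split_ifs <;> omega
  · rw [show 1 % N = 0 by simp [show N = 1 by omega]]
    split_ifs <;> omega

lemma val_sub_of_ne {x u : Fin N} (h : x ≠ u) : (x - u).val = (x - (u + 1)).val + 1 := by
  have hx : x - u = x - (u + 1) + 1 := by abel
  have hne : (x - (u + 1)).val ≠ (u - (u + 1)).val := fun h' => h (sub_left_inj.mp (Fin.ext h'))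
  rw [val_sub_add_one_self] at hne
  rw [hx, val_add_eq_ite, val_one', Nat.mod_eq_of_lt (by omega), if_neg (by omega)]

end Fin

section NonCrossing

variable {N : ℕ} {P : Finpartition (univ : Finset (Fin N))} {i j k : Fin N}

lemma sameBlock_iff_part_eq : SameBlock P i j ↔ P.part i = P.part j := by
  rw [SameBlock, ← P.mem_part_iff_exists, P.mem_part_iff_part_eq_part (mem_univ _) (mem_univ _)]

lemma SameBlock.symm (h : SameBlock P i j) : SameBlock P j i :=
  sameBlock_iff_part_eq.mpr (sameBlock_iff_part_eq.mp h).symm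

lemma SameBlock.trans (hij : SameBlock P i j) (hjk : SameBlock P j k) : SameBlock P i k :=
  sameBlock_iff_part_eq.mpr ((sameBlock_iff_part_eq.mp hij).trans (sameBlock_iff_part_eq.mp hjk))

lemma IsNonCrossing.sameBlock_of_val_sub_lt (hP : IsNonCrossing P) (o : Fin N) {a b c d : Fin N}
    (hab : (a - o).val < (b - o).val) (hbc : (b - o).val < (c - o).val)
    (hcd : (c - o).val < (d - o).val) (hac : SameBlock P a c) (hbd : SameBlock P b d) :
    SameBlock P a b := by
  rcases Fin.rotation_lt_of_val_sub_lt hab hbc hcd with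
    ⟨h₁, h₂, h₃⟩ | ⟨h₁, h₂, h₃⟩ | ⟨h₁, h₂, h₃⟩ | ⟨h₁, h₂, h₃⟩
  · exact hP a b c d h₁ h₂ h₃ hac hbd
  · exact hac.trans (hP b c d a h₁ h₂ h₃ hbd hac.symm).symm
  · exact hac.trans ((hP c d a b h₁ h₂ h₃ hac.symm hbd.symm).trans hbd.symm)
  · exact (hP d a b c h₁ h₂ h₃ hbd.symm hac).symm.trans hbd.symm

/-- The cyclic interval `[w, v)` of `ℤ/Nℤ`; it is empty, not the whole circle, when `v = w`. -/
def cyclicIco (w v : Fin N) : Finset (Fin N) := {x | (x - w).val < (v - w).val}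

lemma card_cyclicIco [NeZero N] (w v : Fin N) : #(cyclicIco w v) = (v - w).val := by
  rw [card_equiv (Equiv.subRight w) (t := {y : Fin N | y.val < (v - w).val})
    (fun x => by simp [cyclicIco]), Fin.card_filter_val_lt, min_eq_right (v - w).isLt.le]

lemma self_notMem_cyclicIco_add_one [NeZero N] (u v : Fin N) : u ∉ cyclicIco (u + 1) v := by
  simp only [cyclicIco, mem_filter, mem_univ, true_and, not_lt, Fin.val_sub_add_one_self]
  exact Nat.le_sub_one_of_lt (v - (u + 1)).isLt

def IsBlockClosed (P : Finpartition (univ : Finset (Fin N))) (I : Finset (Fin N)) : Prop :=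
  ∀ x ∈ I, ∀ y, SameBlock P x y → y ∈ I

lemma IsBlockClosed.mem_iff {I : Finset (Fin N)} (hI : IsBlockClosed P I) (h : SameBlock P i j) :
    i ∈ I ↔ j ∈ I :=
  ⟨fun hi => hI i hi j h, fun hj => hI j hj i h.symm⟩

lemma IsBlockClosed.even_card {I : Finset (Fin N)} (hI : IsBlockClosed P I)
    (heven : ∀ b ∈ P.parts, Even #b) : Even #I := by
  have hsum : #I = ∑ q ∈ P.parts, #(q ∩ I) := by
    rw [← (P.restrict (subset_univ I)).sum_card_parts]
    exact P.sum_restrict _ card card_empty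
  rw [hsum]
  refine even_sum _ fun q hq => ?_
  rcases (q ∩ I).eq_empty_or_nonempty with h | ⟨x, hx⟩
  · simp [h]
  · rw [mem_inter] at hx
    rw [inter_eq_left.mpr fun y hy => hI x hx.2 y ⟨q, hq, hx.1, hy⟩]
    exact heven q hq

lemma IsNonCrossing.isBlockClosed_cyclicIco [NeZero N] (hP : IsNonCrossing P) {u v : Fin N}
    (huv : SameBlock P u v) (hgap : ∀ x ∈ cyclicIco (u + 1) v, ¬ SameBlock P u x) :
    IsBlockClosed P (cyclicIco (u + 1) v) := by
  intro x hx y hxy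
  by_contra hy
  have hyv : y ≠ v := by
    rintro rfl
    exact hgap x hx (huv.trans hxy.symm)
  have hyu : y ≠ u := by
    rintro rfl
    exact hgap x hx hxy.symm
  simp only [cyclicIco, mem_filter, mem_univ, true_and, not_lt] at hx hy
  have hvy : (v - (u + 1)).val < (y - (u + 1)).val :=
    hy.lt_of_ne fun h => hyv (sub_left_inj.mp (Fin.ext h)).symm
  have hyu' : (y - (u + 1)).val < (u - (u + 1)).val := by
    have := (y - u).isLt
    rw [Fin.val_sub_of_ne hyu] at this
    rw [Fin.val_sub_add_one_self]
    omega
  exact hgap x (by simpa [cyclicIco] using hx)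
    (huv.trans (hP.sameBlock_of_val_sub_lt (u + 1) hx hvy hyu' hxy huv.symm).symm)

/-- Here `v` is the element of the block of `u` that follows `u` around the circle, and the
evenness says that consecutive elements of a block alternate in parity. -/
theorem IsNonCrossing.exists_sameBlock_even_gap [NeZero N] (hP : IsNonCrossing P)
    (heven : ∀ b ∈ P.parts, Even #b) (u : Fin N) :
    ∃ v, SameBlock P u v ∧ IsBlockClosed P (cyclicIco (u + 1) v) ∧ Even (v - (u + 1)).val := by
  have hu : u ∈ P.part u := P.mem_part (mem_univ u)
  have hcard : 2 ≤ #(P.part u) := by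
    obtain ⟨t, ht⟩ := heven _ (P.part_mem.mpr (mem_univ u))
    have := card_pos.mpr ⟨u, hu⟩
    omega
  obtain ⟨v, hv, hmin⟩ := exists_min_image ((P.part u).erase u) (fun x => (x - (u + 1)).val)
    (card_pos.mp (by rw [card_erase_of_mem hu]; omega))
  have huv : SameBlock P u v := ⟨P.part u, P.part_mem.mpr (mem_univ u), hu, mem_of_mem_erase hv⟩
  have hgap : ∀ x ∈ cyclicIco (u + 1) v, ¬ SameBlock P u x := by
    intro x hx hux
    have hxu : x ≠ u := fun h => self_notMem_cyclicIco_add_one u v (h ▸ hx)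
    have := hmin x (mem_erase.mpr ⟨hxu, P.mem_part_iff_exists.mpr (hux.symm)⟩)
    simp only [cyclicIco, mem_filter, mem_univ, true_and] at hx
    omega
  have hclosed := hP.isBlockClosed_cyclicIco huv hgap
  exact ⟨v, huv, hclosed, card_cyclicIco (u + 1) v ▸ hclosed.even_card heven⟩

end NonCrossing

section Doubling

variable {m : ℕ}

lemma exists_eq_dbl_or_eq_dbl' (x : Fin (2 * m)) : ∃ j, x = dbl j ∨ x = dbl' j := by
  refine ⟨⟨x.val / 2, by omega⟩, ?_⟩
  rcases Nat.even_or_odd' x.val with ⟨t, ht | ht⟩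
  · exact Or.inl (Fin.ext (by simp only [dbl]; omega))
  · exact Or.inr (Fin.ext (by simp only [dbl']; omega))

lemma dbl_sub_dbl (j c : Fin m) : dbl j - dbl c = dbl (j - c) := by
  ext
  simp only [dbl, Fin.val_sub_eq_ite, Fin.le_def]
  split_ifs <;> omega

lemma dbl'_sub_dbl (j c : Fin m) : dbl' j - dbl c = dbl' (j - c) := by
  ext
  simp only [dbl, dbl', Fin.val_sub_eq_ite, Fin.le_def]
  split_ifs <;> omega

lemma dbl'_add_one [NeZero m] (k : Fin m) : dbl' k + 1 = dbl (k + 1) := by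
  ext
  simp only [dbl, dbl', Fin.val_add, Fin.val_one', Nat.add_mod_mod]
  rw [← Nat.mul_mod_mul_left]
  ring_nf

lemma dbl_mem_cyclicIco_iff {j c l : Fin m} :
    dbl j ∈ cyclicIco (dbl c) (dbl l) ↔ j ∈ cyclicIco c l := by
  simp only [cyclicIco, mem_filter, mem_univ, true_and, dbl_sub_dbl]
  simp only [dbl]
  omega

lemma dbl'_mem_cyclicIco_iff {j c l : Fin m} :
    dbl' j ∈ cyclicIco (dbl c) (dbl l) ↔ j ∈ cyclicIco c l := by
  simp only [cyclicIco, mem_filter, mem_univ, true_and, dbl_sub_dbl, dbl'_sub_dbl]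
  simp only [dbl, dbl']
  omega

lemma PhiRel.mem_iff {π : Finpartition (univ : Finset (Fin (2 * m)))} {I : Finset (Fin (2 * m))}
    (hI : IsBlockClosed π I) {S : Finset (Fin m)} (hdbl : ∀ j, dbl j ∈ I ↔ j ∈ S)
    (hdbl' : ∀ j, dbl' j ∈ I ↔ j ∈ S) {k l : Fin m} (hkl : PhiRel π k l) : k ∈ S ↔ l ∈ S := by
  have hequiv : Equivalence fun a b : Fin m => a ∈ S ↔ b ∈ S :=
    ⟨fun _ => Iff.rfl, Iff.symm, Iff.trans⟩
  refine hequiv.eqvGen_iff.mp (Relation.EqvGen.mono (fun a b hab => ?_) k l hkl)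
  rcases hab with h | h | h | h <;> simpa only [hdbl, hdbl'] using hI.mem_iff h

end Doubling

lemma IsCyclicSuccIn.eq_of_notMem_cyclicIco {m : ℕ} [NeZero m] {B : Finset (Fin m)}
    {k l l₀ : Fin m} (h : IsCyclicSuccIn B k l) (hl₀ : l₀ ∈ B) (hl : l ∉ cyclicIco (k + 1) l₀) :
    l = l₀ := by
  rcases h with ⟨-, -, ⟨hB, rfl⟩ | ⟨hlk, hmin⟩⟩
  · rw [hB] at hl₀
    exact (mem_singleton.mp hl₀).symm
  have hle : (l - (k + 1)).val ≤ (l₀ - (k + 1)).val := by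
    by_cases hl₀k : l₀ = k
    · rw [hl₀k, Fin.val_sub_add_one_self]
      exact Nat.le_sub_one_of_lt (l - (k + 1)).isLt
    · have := hmin l₀ hl₀ hl₀k
      rw [Fin.val_sub_of_ne hlk, Fin.val_sub_of_ne hl₀k] at this
      omega
  have hge : (l₀ - (k + 1)).val ≤ (l - (k + 1)).val := by simpa [cyclicIco] using hl
  exact sub_left_inj.mp (Fin.ext (le_antisymm hle hge))

theorem block_of_Phi_connects_general (m : ℕ)
    (π : Finpartition (Finset.univ : Finset (Fin (2 * m))))
    (hnc : IsNonCrossing π) (heven : ∀ b ∈ π.parts, Even b.card)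
    (k l : Fin m)
    (hsucc : IsCyclicSuccIn (Finset.univ.filter (fun j => PhiRel π k j)) k l) :
    SameBlock π (dbl' k) (dbl l) := by
  have : NeZero m := NeZero.of_pos k.pos
  obtain ⟨v, huv, hclosed, hgap⟩ := hnc.exists_sameBlock_even_gap heven (dbl' k)
  obtain ⟨l₀, rfl⟩ : ∃ l₀, v = dbl l₀ := by
    obtain ⟨j, rfl | rfl⟩ := exists_eq_dbl_or_eq_dbl' v
    · exact ⟨j, rfl⟩
    · rw [dbl'_add_one, dbl'_sub_dbl] at hgap
      exact absurd hgap (Nat.not_even_two_mul_add_one _)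
  rw [dbl'_add_one] at hclosed
  have hl₀ : PhiRel π k l₀ := .rel _ _ (Or.inr (Or.inr (Or.inl huv)))
  have hl : l ∉ cyclicIco (k + 1) l₀ := fun hmem =>
    self_notMem_cyclicIco_add_one k l₀ <|
      ((mem_filter.mp hsucc.2.1).2.mem_iff hclosed (fun _ => dbl_mem_cyclicIco_iff)
        (fun _ => dbl'_mem_cyclicIco_iff)).mpr hmem
  rwa [hsucc.eq_of_notMem_cyclicIco (mem_filter.mpr ⟨mem_univ _, hl₀⟩) hl]

/-- If `{k₁ < ... < k_p}` (cyclically ordered) is a block of `Φ(π)` for a non-crossing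
`π` on `[2m]` with even blocks, then `2kᵢ ∼_π 2k_{i+1} − 1` for every `i` (with
`k_{p+1} = k₁`).  Here 1-based `2k` corresponds to `dbl' k` and `2l−1` to `dbl l`. -/
theorem block_of_Phi_connects (m : ℕ) (hm : 0 < m)
    (π : Finpartition (Finset.univ : Finset (Fin (2 * m))))
    (hnc : IsNonCrossing π) (heven : ∀ b ∈ π.parts, Even b.card)
    (k l : Fin m)
    (hsucc : IsCyclicSuccIn (Finset.univ.filter (fun j => PhiRel π k j)) k l) :
    SameBlock π (dbl' k) (dbl l) :=
  block_of_Phi_connects_general m π hnc heven k l hsucc
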